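/- If a finite connected Eulerian graph G has a vertex r such that G − r contains a cycle, then there is a maximal trail starting at r that does not use all edges of G. -/

import Mathlib

/-!
Delete the edges of a cycle `C` of `G - r`: every vertex keeps even degree. A trail from `r` in
the remaining graph that cannot be extended ends at `r`, since at any other endpoint it would use
an odd number of that endpoint's edges, i.e. not all of them. As `r` is not on `C`, this trail
uses every edge of `G` at `r`, and it misses the edges of `C`.
-/

open Finset

namespace SimpleGraph

variable {V : Type*} {G : SimpleGraph V}

lemma exists_isCycle_support_subset_of_not_isAcyclic_induce {s : Set V}
    (h : ¬ (G.induce s).IsAcyclic) :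
    ∃ (a : V) (c : G.Walk a a), c.IsCycle ∧ ∀ x ∈ c.support, x ∈ s := by
  simp only [IsAcyclic, not_forall, not_not] at h
  obtain ⟨a, c, hc⟩ := h
  refine ⟨_, c.map (Embedding.induce (G := G) s).toHom,
    hc.map (Embedding.induce (G := G) s).injective, ?_⟩
  intro x hx
  rw [Walk.support_map, List.mem_map] at hx
  obtain ⟨y, -, rfl⟩ := hx
  exact y.2

namespace Walk

lemma IsTrail.exists_isTrail_forall_adj_mem_edges [Fintype G.edgeSet] {u v : V}
    {p : G.Walk u v} (hp : p.IsTrail) :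
    ∃ (x : V) (q : G.Walk u x), q.IsTrail ∧ ∀ y, G.Adj x y → s(x, y) ∈ q.edges := by
  by_cases hmax : ∀ y, G.Adj v y → s(v, y) ∈ p.edges
  · exact ⟨v, p, hp, hmax⟩
  push Not at hmax
  obtain ⟨y, hy, hnew⟩ := hmax
  have hp' : (p.concat hy).IsTrail := by
    rw [isTrail_def, edges_concat, List.nodup_concat]
    exact ⟨hnew, hp.edges_nodup⟩
  exact hp'.exists_isTrail_forall_adj_mem_edges
termination_by #G.edgeFinset - p.length
decreasing_by
  have := hp'.length_le_card_edgeFinset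
  simp only [length_concat] at *
  omega

section Degree

variable [DecidableEq V] [G.LocallyFinite]

lemma IsTrail.countP_edges_eq_card_filter_incidenceFinset {u v : V} {p : G.Walk u v}
    (hp : p.IsTrail) (x : V) :
    p.edges.countP (x ∈ ·) = #{e ∈ G.incidenceFinset x | e ∈ p.edges} := by
  rw [List.countP_eq_length_filter, ← List.toFinset_card_of_nodup (hp.edges_nodup.filter _)]
  congr 1
  ext e
  simp only [List.mem_toFinset, List.mem_filter, mem_filter, mem_incidenceFinset,
    incidenceSet, decide_eq_true_eq]
  exact ⟨fun ⟨he, hx⟩ => ⟨⟨p.edges_subset_edgeSet he, hx⟩, he⟩, fun ⟨⟨_, hx⟩, he⟩ => ⟨he, hx⟩⟩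

lemma IsTrail.countP_edges_eq_degree {u v : V} {p : G.Walk u v} (hp : p.IsTrail) {x : V}
    (h : ∀ y, G.Adj x y → s(x, y) ∈ p.edges) :
    p.edges.countP (x ∈ ·) = G.degree x := by
  rw [hp.countP_edges_eq_card_filter_incidenceFinset, ← card_incidenceFinset_eq_degree,
    filter_true_of_mem]
  intro e he
  obtain ⟨he, hx⟩ := (G.mem_incidenceFinset x e).1 he
  obtain ⟨y, rfl⟩ := Sym2.mem_iff_exists.1 hx
  exact h y he

lemma IsTrail.eq_of_forall_adj_mem_edges {u v : V} {p : G.Walk u v} (hp : p.IsTrail)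
    (hv : Even (G.degree v)) (h : ∀ y, G.Adj v y → s(v, y) ∈ p.edges) : u = v := by
  by_contra huv
  rw [← hp.countP_edges_eq_degree h, hp.even_countP_edges_iff] at hv
  exact (hv huv).2 rfl

lemma IsTrail.degree_deleteEdges_add_countP_edges {u v : V} {p : G.Walk u v} (hp : p.IsTrail)
    [(G.deleteEdges p.edgeSet).LocallyFinite] (x : V) :
    (G.deleteEdges p.edgeSet).degree x + p.edges.countP (x ∈ ·) = G.degree x := by
  have hinc : (G.deleteEdges p.edgeSet).incidenceFinset x =
      {e ∈ G.incidenceFinset x | e ∉ p.edges} := by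
    ext e
    simp only [mem_incidenceFinset, incidenceSet, edgeSet_deleteEdges, mem_filter,
      Set.mem_ofPred_eq, Set.mem_sdiff, mem_edgeSet]
    tauto
  rw [hp.countP_edges_eq_card_filter_incidenceFinset, ← card_incidenceFinset_eq_degree,
    ← card_incidenceFinset_eq_degree, hinc, add_comm, card_filter_add_card_filter_not]

lemma IsCircuit.even_degree_deleteEdges {u : V} {c : G.Walk u u} (hc : c.IsCircuit)
    [(G.deleteEdges c.edgeSet).LocallyFinite] {x : V} (hx : Even (G.degree x)) :
    Even ((G.deleteEdges c.edgeSet).degree x) := by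
  have hcount : Even (c.edges.countP (x ∈ ·)) :=
    (hc.isTrail.even_countP_edges_iff x).2 fun h => absurd rfl h
  rw [← hc.isTrail.degree_deleteEdges_add_countP_edges x, Nat.even_add] at hx
  exact hx.2 hcount

end Degree

end Walk

end SimpleGraph

open SimpleGraph Walk

theorem stmt_15_general {V : Type} [Fintype V] [DecidableEq V] (G : SimpleGraph V)
    [DecidableRel G.Adj] (heven : ∀ v : V, Even (G.degree v))
    (r : V) (hcyc : ¬ (G.induce {x : V | x ≠ r}).IsAcyclic) :
    ∃ (v : V) (w : G.Walk r v), w.IsTrail ∧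
      (∀ u : V, G.Adj v u → s(v, u) ∈ w.edges) ∧
      ∃ e ∈ G.edgeSet, e ∉ w.edges := by
  classical
  obtain ⟨a, c, hc, hcr⟩ := exists_isCycle_support_subset_of_not_isAcyclic_induce hcyc
  set D := G.deleteEdges c.edgeSet
  obtain ⟨v, w, hw, hmax⟩ :=
    (IsTrail.nil : (nil : D.Walk r r).IsTrail).exists_isTrail_forall_adj_mem_edges
  obtain rfl : r = v :=
    hw.eq_of_forall_adj_mem_edges (hc.isCircuit.even_degree_deleteEdges (heven v)) hmax
  have hwC : ∀ e ∈ w.edges, e ∉ c.edges := fun e he => by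
    have := w.edges_subset_edgeSet he
    rw [edgeSet_deleteEdges] at this
    exact this.2
  have hC := c.mk_start_snd_mem_edges hc.not_nil
  refine ⟨r, w.mapLe (deleteEdges_le _), hw.mapLe _, fun u hu => ?_,
    _, c.edges_subset_edgeSet hC, ?_⟩
  · rw [edges_mapLe_eq_edges]
    exact hmax u (deleteEdges_adj.2 ⟨hu, fun h => hcr r (c.fst_mem_support_of_mem_edges h) rfl⟩)
  · rw [edges_mapLe_eq_edges]
    exact fun he => hwC _ he hC

/-- If a finite connected Eulerian graph `G` has a vertex `r` with a cycle in `G − r`,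
then there is a maximal trail starting at `r` (no unused edge at its final vertex)
that does not use all edges of `G`. -/
theorem stmt_15 {V : Type} [Fintype V] [DecidableEq V] (G : SimpleGraph V)
    [DecidableRel G.Adj] (hG : G.Connected) (heven : ∀ v : V, Even (G.degree v))
    (r : V) (hcyc : ¬ (G.induce {x : V | x ≠ r}).IsAcyclic) :
    ∃ (v : V) (w : G.Walk r v), w.IsTrail ∧
      (∀ u : V, G.Adj v u → s(v, u) ∈ w.edges) ∧
      ∃ e ∈ G.edgeSet, e ∉ w.edges :=
  stmt_15_general G heven r hcyc
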